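/- arXiv:2208.05221 — 2 statements merged into one kernel-verified Lean document; each statement's English description precedes it below -/
import Mathlib

section
/- Let N ≥ 3 and let φ₁, φ₂ be bounded radial functions on B_R with associated potentials U_{φ_i}(r) = ∫_0^r |S^(N-1)| s^(N-1)(s^(2-N) − r^(2-N)) |φ_i(s)|² ds. If φ₁ = φ₂ on [0, R₂], then for r ∈ (R₂, R₂ + ε), |U_{φ₁}(r) − U_{φ₂}(r)| ≤ C · r² · sup_{s ∈ (R₂, R₂+ε)} |φ₁(s) − φ₂(s)|, where C depends only on N and the bounds on φ₁, φ₂. -/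
open MeasureTheory Set intervalIntegral

/-!
Since `φ₁ = φ₂` on `[0, R₂]`, the integrands of `U₁ r` and `U₂ r` differ only for `s > R₂`,
where `|φ₁² - φ₂²| ≤ 2M |φ₁ - φ₂|`. For `0 < s ≤ r` the kernel `s^(N-1) (s^(2-N) - r^(2-N))`
lies in `[0, s] ⊆ [0, r]`, so integrating over `(0, r]` costs a factor `r · r`.
-/

theorem abs_sq_sub_sq_le {a b M : ℝ} (ha : |a| ≤ M) (hb : |b| ≤ M) :
    |a ^ 2 - b ^ 2| ≤ 2 * M * |a - b| := by
  rw [sq_sub_sq, abs_mul]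
  gcongr
  calc |a + b| ≤ |a| + |b| := abs_add_le a b
    _ ≤ 2 * M := by linarith

theorem IntervalIntegrable.of_abs_le {f : ℝ → ℝ} {a b C : ℝ} (hf : Measurable f)
    (hC : ∀ s ∈ uIoc a b, |f s| ≤ C) : IntervalIntegrable f volume a b := by
  rw [intervalIntegrable_iff]
  refine IntegrableOn.of_bound measure_Ioc_lt_top hf.aestronglyMeasurable C ?_
  filter_upwards [ae_restrict_mem measurableSet_uIoc] with s hs
  exact hC s hs

theorem abs_integral_mul_sub_integral_mul_le {K f g : ℝ → ℝ} {r k d : ℝ} (hr : 0 ≤ r)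
    (hKf : IntervalIntegrable (fun s => K s * f s) volume 0 r)
    (hKg : IntervalIntegrable (fun s => K s * g s) volume 0 r)
    (hK : ∀ s ∈ Ioc 0 r, K s ∈ Icc 0 k) (hfg : ∀ s ∈ Ioc 0 r, |f s - g s| ≤ d) :
    |(∫ s in 0..r, K s * f s) - ∫ s in 0..r, K s * g s| ≤ k * d * r := by
  rw [← integral_sub hKf hKg]
  have hbound : ∀ s ∈ uIoc 0 r, ‖K s * f s - K s * g s‖ ≤ k * d := by
    intro s hs
    rw [uIoc_of_le hr] at hs
    obtain ⟨hK0, hKk⟩ := hK s hs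
    rw [← mul_sub, Real.norm_eq_abs, abs_mul, abs_of_nonneg hK0]
    exact mul_le_mul hKk (hfg s hs) (abs_nonneg _) (hK0.trans hKk)
  simpa [abs_of_nonneg hr] using norm_integral_le_of_norm_le_const hbound

section PotentialKernel

variable {N : ℕ} {A r s : ℝ}

theorem pow_pred_mul_rpow_two_sub (hN : 1 ≤ N) (hs : 0 < s) :
    s ^ (N - 1) * s ^ ((2 : ℝ) - N) = s := by
  rw [← Real.rpow_natCast, ← Real.rpow_add hs, Nat.cast_sub hN]
  norm_num

theorem potentialKernel_nonneg (hN : 2 ≤ N) (hs : 0 < s) (hsr : s ≤ r) :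
    0 ≤ s ^ (N - 1) * (s ^ ((2 : ℝ) - N) - r ^ ((2 : ℝ) - N)) := by
  have hexp : (2 : ℝ) - N ≤ 0 := sub_nonpos.2 (by exact_mod_cast hN)
  have := Real.rpow_le_rpow_of_nonpos hs hsr hexp
  exact mul_nonneg (by positivity) (by linarith)

theorem potentialKernel_le (hN : 1 ≤ N) (hs : 0 < s) (hr : 0 ≤ r) :
    s ^ (N - 1) * (s ^ ((2 : ℝ) - N) - r ^ ((2 : ℝ) - N)) ≤ s := by
  rw [mul_sub, pow_pred_mul_rpow_two_sub hN hs, sub_le_self_iff]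
  positivity

theorem potentialKernel_mem_Icc (hN : 2 ≤ N) (hA : 0 ≤ A) (hs : s ∈ Ioc 0 r) :
    A * s ^ (N - 1) * (s ^ ((2 : ℝ) - N) - r ^ ((2 : ℝ) - N)) ∈ Icc 0 (A * r) := by
  obtain ⟨hs0, hsr⟩ := hs
  rw [mul_assoc]
  exact ⟨mul_nonneg hA (potentialKernel_nonneg hN hs0 hsr), mul_le_mul_of_nonneg_left
    ((potentialKernel_le (by omega) hs0 (hs0.le.trans hsr)).trans hsr) hA⟩

theorem intervalIntegrable_potentialKernel_mul_sq (hN : 2 ≤ N) (hA : 0 ≤ A) (hr : 0 ≤ r)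
    {φ : ℝ → ℝ} {M : ℝ} (hφ : Measurable φ) (hb : ∀ s ∈ Ioc 0 r, |φ s| ≤ M) :
    IntervalIntegrable
      (fun s => A * s ^ (N - 1) * (s ^ ((2 : ℝ) - N) - r ^ ((2 : ℝ) - N)) * φ s ^ 2)
      volume 0 r := by
  refine .of_abs_le (C := A * r * M ^ 2) (by fun_prop) fun s hs => ?_
  rw [uIoc_of_le hr] at hs
  obtain ⟨hK0, hKr⟩ := potentialKernel_mem_Icc hN hA hs
  rw [abs_mul, abs_of_nonneg hK0, abs_pow]
  exact mul_le_mul hKr (pow_le_pow_left₀ (abs_nonneg _) (hb s hs) 2) (by positivity)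
    (hK0.trans hKr)

end PotentialKernel

theorem potential_lipschitz_estimate_general (N : ℕ) (hN : 3 ≤ N) (R R₂ ε M A : ℝ)
    (hR₂ : 0 ≤ R₂) (hle : R₂ + ε ≤ R) (hM : 0 < M) (hA : 0 < A)
    (φ₁ φ₂ : ℝ → ℝ) (hm₁ : Measurable φ₁) (hm₂ : Measurable φ₂)
    (hb₁ : ∀ s ∈ Icc 0 R, |φ₁ s| ≤ M) (hb₂ : ∀ s ∈ Icc 0 R, |φ₂ s| ≤ M)
    (heq : ∀ s ∈ Icc 0 R₂, φ₁ s = φ₂ s)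
    (U₁ U₂ : ℝ → ℝ)
    (hU₁ : ∀ r, U₁ r = ∫ s in (0 : ℝ)..r,
      A * s ^ (N - 1) * (s ^ ((2 : ℝ) - N) - r ^ ((2 : ℝ) - N)) * φ₁ s ^ 2)
    (hU₂ : ∀ r, U₂ r = ∫ s in (0 : ℝ)..r,
      A * s ^ (N - 1) * (s ^ ((2 : ℝ) - N) - r ^ ((2 : ℝ) - N)) * φ₂ s ^ 2) :
    ∃ C > 0, ∀ r ∈ Ioo R₂ (R₂ + ε),
      |U₁ r - U₂ r| ≤ C * r ^ 2 * sSup ((fun s => |φ₁ s - φ₂ s|) '' Ioo R₂ (R₂ + ε)) := by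
  set S := (fun s => |φ₁ s - φ₂ s|) '' Ioo R₂ (R₂ + ε)
  have hbdd : BddAbove S := by
    refine ⟨2 * M, ?_⟩
    rintro _ ⟨s, hs, rfl⟩
    have hs' : s ∈ Icc 0 R := ⟨hR₂.trans hs.1.le, hs.2.le.trans hle⟩
    linarith [abs_sub (φ₁ s) (φ₂ s), hb₁ s hs', hb₂ s hs']
  refine ⟨2 * A * M, by positivity, fun r hr => ?_⟩
  have hr0 : 0 < r := hR₂.trans_lt hr.1
  have hIoc : Ioc 0 r ⊆ Icc 0 R := fun s hs => ⟨hs.1.le, hs.2.trans (hr.2.le.trans hle)⟩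
  have hS : 0 ≤ sSup S := (abs_nonneg _).trans (le_csSup hbdd ⟨r, hr, rfl⟩)
  have hsq : ∀ s ∈ Ioc 0 r, |φ₁ s ^ 2 - φ₂ s ^ 2| ≤ 2 * M * sSup S := by
    intro s hs
    rcases le_or_gt s R₂ with hsR₂ | hsR₂
    · rw [heq s ⟨hs.1.le, hsR₂⟩, sub_self, abs_zero]
      positivity
    · refine (abs_sq_sub_sq_le (hb₁ s (hIoc hs)) (hb₂ s (hIoc hs))).trans ?_
      gcongr
      exact le_csSup hbdd ⟨s, ⟨hsR₂, hs.2.trans_lt hr.2⟩, rfl⟩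
  have hN2 : 2 ≤ N := by omega
  rw [hU₁, hU₂]
  calc _ ≤ A * r * (2 * M * sSup S) * r :=
        abs_integral_mul_sub_integral_mul_le hr0.le
          (intervalIntegrable_potentialKernel_mul_sq hN2 hA.le hr0.le hm₁ (hb₁ · <| hIoc ·))
          (intervalIntegrable_potentialKernel_mul_sq hN2 hA.le hr0.le hm₂ (hb₂ · <| hIoc ·))
          (fun _ hs => potentialKernel_mem_Icc hN2 hA.le hs) hsq
    _ = 2 * A * M * r ^ 2 * sSup S := by ring

/-- Lipschitz-type estimate for the nonlocal potential with respect to the density: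
if `φ₁ = φ₂` on `[0, R₂]`, then on `(R₂, R₂ + ε)` one has
`|U_{φ₁}(r) - U_{φ₂}(r)| ≤ C r² sup_{(R₂, R₂+ε)} |φ₁ - φ₂|`. -/
theorem potential_lipschitz_estimate (N : ℕ) (hN : 3 ≤ N) (R R₂ ε M A : ℝ)
    (hR₂ : 0 ≤ R₂) (hε : 0 < ε) (hle : R₂ + ε ≤ R) (hM : 0 < M) (hA : 0 < A)
    (φ₁ φ₂ : ℝ → ℝ) (hm₁ : Measurable φ₁) (hm₂ : Measurable φ₂)
    (hb₁ : ∀ s ∈ Icc 0 R, |φ₁ s| ≤ M) (hb₂ : ∀ s ∈ Icc 0 R, |φ₂ s| ≤ M)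
    (heq : ∀ s ∈ Icc 0 R₂, φ₁ s = φ₂ s)
    (U₁ U₂ : ℝ → ℝ)
    (hU₁ : ∀ r, U₁ r = ∫ s in (0 : ℝ)..r,
      A * s ^ (N - 1) * (s ^ ((2 : ℝ) - N) - r ^ ((2 : ℝ) - N)) * φ₁ s ^ 2)
    (hU₂ : ∀ r, U₂ r = ∫ s in (0 : ℝ)..r,
      A * s ^ (N - 1) * (s ^ ((2 : ℝ) - N) - r ^ ((2 : ℝ) - N)) * φ₂ s ^ 2) :
    ∃ C > 0, ∀ r ∈ Ioo R₂ (R₂ + ε),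
      |U₁ r - U₂ r| ≤ C * r ^ 2 * sSup ((fun s => |φ₁ s - φ₂ s|) '' Ioo R₂ (R₂ + ε)) :=
  potential_lipschitz_estimate_general N hN R R₂ ε M A hR₂ hle hM hA φ₁ φ₂ hm₁ hm₂ hb₁ hb₂ heq U₁ U₂
    hU₁ hU₂
end

section
/- Let N ≥ 3 and let φ₁, φ₂ be positive C² radial solutions on B_R of −Δφ_i + U_{φ_i} φ_i = λ φ_i with φ_i'(0) = 0 and U_{φ} as in the paper (monotone increasing in φ pointwise: φ₁ ≥ φ₂ on [0,r] implies U_{φ₁}(r) ≥ U_{φ₂}(r)). If φ₁(0) > φ₂(0), then φ₁(r) > φ₂(r) for all r ∈ [0, R). -/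
open MeasureTheory Set intervalIntegral

/-!
Suppose `φ₁ ≤ φ₂` somewhere and let `r₀ > 0` be the first such point. On `[0, r₀)` we have
`φ₁ > φ₂ > 0`, and since the kernel `s^(N-1) (s^(2-N) - r^(2-N))` is nonnegative for `s ≤ r`,
the potentials satisfy `U₁ ≥ U₂` there. The weighted Wronskian
`W = r^(N-1) (φ₁' φ₂ - φ₂' φ₁)` has derivative `r^(N-1) (U₁ - U₂) φ₁ φ₂ ≥ 0` and vanishes at
`0` because of the weight, so `W ≥ 0` and `(φ₁ / φ₂)' = W / (r^(N-1) φ₂²) ≥ 0` on `(0, r₀)`.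
Hence `φ₁ (r₀) / φ₂ (r₀) ≥ φ₁ 0 / φ₂ 0 > 1`, contradicting `φ₁ (r₀) ≤ φ₂ (r₀)`.
-/

theorem exists_first_le_of_lt {f g : ℝ → ℝ} {a b : ℝ} (hab : a ≤ b)
    (hf : ContinuousOn f (Icc a b)) (hg : ContinuousOn g (Icc a b))
    (ha : g a < f a) (hb : f b ≤ g b) :
    ∃ c ∈ Ioc a b, f c ≤ g c ∧ ∀ s ∈ Ico a c, g s < f s := by
  obtain ⟨c, ⟨hc, hfgc⟩, hleast⟩ := (isCompact_Icc.of_isClosed_subset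
    (isClosed_Icc.isClosed_le hf hg) (sep_subset _ _)).exists_isLeast ⟨b, right_mem_Icc.2 hab, hb⟩
  have hac : a < c := hc.1.lt_of_ne (by rintro rfl; exact hfgc.not_gt ha)
  exact ⟨c, ⟨hac, hc.2⟩, hfgc, fun s hs =>
    lt_of_not_ge fun hfgs => (hleast ⟨⟨hs.1, hs.2.le.trans hc.2⟩, hfgs⟩).not_gt hs.2⟩

theorem pow_sub_one_mul_rpow_two_sub {N : ℕ} (hN : 1 ≤ N) {s : ℝ} (hs : 0 ≤ s) :
    s ^ (N - 1) * s ^ ((2 : ℝ) - N) = s := by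
  have h : ((N - 1 : ℕ) : ℝ) + (2 - N) = 1 := by rw [Nat.cast_sub hN]; ring
  rw [← Real.rpow_natCast, ← Real.rpow_add' hs (by rw [h]; exact one_ne_zero), h, Real.rpow_one]

theorem radial_newton_kernel_nonneg {N : ℕ} (hN : 2 ≤ N) {s t : ℝ} (hs : 0 ≤ s) (hst : s ≤ t) :
    0 ≤ s ^ (N - 1) * (s ^ ((2 : ℝ) - N) - t ^ ((2 : ℝ) - N)) := by
  rcases hs.eq_or_lt with rfl | hs
  · simp [zero_pow (by omega : N - 1 ≠ 0)]
  · have hexp : (2 : ℝ) - N ≤ 0 := by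
      have : (2 : ℝ) ≤ N := by exact_mod_cast hN
      linarith
    exact mul_nonneg (pow_nonneg hs.le _)
      (sub_nonneg.2 (Real.rpow_le_rpow_of_nonpos hs hst hexp))

theorem continuousOn_radial_newton_integrand {N : ℕ} (hN : 1 ≤ N) (A t : ℝ) {φ : ℝ → ℝ}
    (hφ : ContinuousOn φ (Icc 0 t)) :
    ContinuousOn (fun s => A * s ^ (N - 1) * (s ^ ((2 : ℝ) - N) - t ^ ((2 : ℝ) - N)) * φ s ^ 2)
      (Icc 0 t) := by
  -- `s ^ (N - 1) * s ^ (2 - N) = s` removes the singular factor `s ^ (2 - N)`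
  refine ContinuousOn.congr (f := fun s => A * (s - s ^ (N - 1) * t ^ ((2 : ℝ) - N)) * φ s ^ 2)
    (by fun_prop) fun s hs => ?_
  linear_combination (A * φ s ^ 2) * pow_sub_one_mul_rpow_two_sub hN hs.1

theorem radial_newton_potential_mono {N : ℕ} (hN : 2 ≤ N) {A t : ℝ} (hA : 0 ≤ A) (ht : 0 ≤ t)
    {φ ψ : ℝ → ℝ} (hφ : ContinuousOn φ (Icc 0 t)) (hψ : ContinuousOn ψ (Icc 0 t))
    (hψφ : ∀ s ∈ Icc 0 t, ψ s ^ 2 ≤ φ s ^ 2) :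
    ∫ s in (0 : ℝ)..t, A * s ^ (N - 1) * (s ^ ((2 : ℝ) - N) - t ^ ((2 : ℝ) - N)) * ψ s ^ 2 ≤
      ∫ s in (0 : ℝ)..t, A * s ^ (N - 1) * (s ^ ((2 : ℝ) - N) - t ^ ((2 : ℝ) - N)) * φ s ^ 2 :=
  integral_mono_on ht
    ((continuousOn_radial_newton_integrand (by omega) A t hψ).intervalIntegrable_of_Icc ht)
    ((continuousOn_radial_newton_integrand (by omega) A t hφ).intervalIntegrable_of_Icc ht)
    fun s hs => mul_le_mul_of_nonneg_left (hψφ s hs) <| by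
      rw [mul_assoc]
      exact mul_nonneg hA (radial_newton_kernel_nonneg hN hs.1 hs.2)

def radialWronskian (N : ℕ) (f₁ f₁' f₂ f₂' : ℝ → ℝ) (t : ℝ) : ℝ :=
  t ^ (N - 1) * (f₁' t * f₂ t - f₂' t * f₁ t)

theorem hasDerivAt_radialWronskian {N : ℕ} (hN : 1 ≤ N) {f₁ f₁' f₂ f₂' : ℝ → ℝ} {V₁ V₂ t : ℝ}
    (ht : t ≠ 0) (hd₁ : HasDerivAt f₁ (f₁' t) t) (hd₂ : HasDerivAt f₂ (f₂' t) t)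
    (hode₁ : HasDerivAt f₁' (V₁ * f₁ t - (N - 1) / t * f₁' t) t)
    (hode₂ : HasDerivAt f₂' (V₂ * f₂ t - (N - 1) / t * f₂' t) t) :
    HasDerivAt (radialWronskian N f₁ f₁' f₂ f₂')
      (t ^ (N - 1) * ((V₁ - V₂) * (f₁ t * f₂ t))) t := by
  have h : HasDerivAt (radialWronskian N f₁ f₁' f₂ f₂') _ t :=
    (hasDerivAt_pow (N - 1) t).mul ((hode₁.mul hd₂).sub (hode₂.mul hd₁))
  refine h.congr_deriv ?_
  obtain ⟨_ | n, rfl⟩ : ∃ n, N = n + 1 := ⟨N - 1, by omega⟩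
  · simp only [zero_add, tsub_self, CharP.cast_eq_zero, zero_tsub, pow_zero, mul_one, zero_mul,
      Nat.cast_one, sub_self, zero_div, sub_zero, one_mul]
    ring
  · simp only [Nat.add_sub_cancel, Nat.cast_add, Nat.cast_one, add_sub_cancel_right, pow_succ]
    field_simp
    ring

theorem monotoneOn_div_of_wronskian_nonneg {f₁ f₁' f₂ f₂' : ℝ → ℝ} {a b : ℝ}
    (hc₁ : ContinuousOn f₁ (Icc a b)) (hc₂ : ContinuousOn f₂ (Icc a b))
    (hpos₂ : ∀ t ∈ Icc a b, 0 < f₂ t)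
    (hd₁ : ∀ t ∈ Ioo a b, HasDerivAt f₁ (f₁' t) t) (hd₂ : ∀ t ∈ Ioo a b, HasDerivAt f₂ (f₂' t) t)
    (hW : ∀ t ∈ Ioo a b, 0 ≤ f₁' t * f₂ t - f₂' t * f₁ t) :
    MonotoneOn (fun t => f₁ t / f₂ t) (Icc a b) := by
  refine monotoneOn_of_hasDerivWithinAt_nonneg (convex_Icc a b)
    (hc₁.div hc₂ fun t ht => (hpos₂ t ht).ne') (fun t ht => ?_) (fun t ht => ?_)
      (f' := fun t => (f₁' t * f₂ t - f₁ t * f₂' t) / f₂ t ^ 2)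
  all_goals rw [interior_Icc] at ht
  · exact ((hd₁ t ht).div (hd₂ t ht) (hpos₂ t (Ioo_subset_Icc_self ht)).ne').hasDerivWithinAt
  · exact div_nonneg (by linarith [hW t ht]) (sq_nonneg _)

section RadialComparison

variable {N : ℕ} {a : ℝ} {f₁ f₁' f₂ f₂' V₁ V₂ : ℝ → ℝ}
  (hc₁ : ContinuousOn f₁ (Icc 0 a)) (hc₂ : ContinuousOn f₂ (Icc 0 a))
  (hc₁' : ContinuousOn f₁' (Icc 0 a)) (hc₂' : ContinuousOn f₂' (Icc 0 a))
  (hd₁ : ∀ t ∈ Ioo 0 a, HasDerivAt f₁ (f₁' t) t) (hd₂ : ∀ t ∈ Ioo 0 a, HasDerivAt f₂ (f₂' t) t)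
  (hode₁ : ∀ t ∈ Ioo 0 a, HasDerivAt f₁' (V₁ t * f₁ t - (N - 1) / t * f₁' t) t)
  (hode₂ : ∀ t ∈ Ioo 0 a, HasDerivAt f₂' (V₂ t * f₂ t - (N - 1) / t * f₂' t) t)
  (hV : ∀ t ∈ Ioo 0 a, V₂ t ≤ V₁ t)
include hc₁ hc₂ hc₁' hc₂' hd₁ hd₂ hode₁ hode₂ hV

theorem radialWronskian_nonneg (hN : 2 ≤ N) (hnn₁ : ∀ t ∈ Ioo 0 a, 0 ≤ f₁ t)
    (hnn₂ : ∀ t ∈ Ioo 0 a, 0 ≤ f₂ t) {t : ℝ} (ht : t ∈ Icc 0 a) :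
    0 ≤ radialWronskian N f₁ f₁' f₂ f₂' t := by
  have hmono : MonotoneOn (radialWronskian N f₁ f₁' f₂ f₂') (Icc 0 a) := by
    refine monotoneOn_of_hasDerivWithinAt_nonneg (convex_Icc 0 a)
      ((continuousOn_pow _).mul ((hc₁'.mul hc₂).sub (hc₂'.mul hc₁))) (fun s hs => ?_)
        (fun s hs => ?_) (f' := fun s => s ^ (N - 1) * ((V₁ s - V₂ s) * (f₁ s * f₂ s)))
    all_goals rw [interior_Icc] at hs
    · exact (hasDerivAt_radialWronskian (by omega) hs.1.ne' (hd₁ s hs) (hd₂ s hs) (hode₁ s hs)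
        (hode₂ s hs)).hasDerivWithinAt
    · exact mul_nonneg (pow_nonneg hs.1.le _)
        (mul_nonneg (sub_nonneg.2 (hV s hs)) (mul_nonneg (hnn₁ s hs) (hnn₂ s hs)))
  have hzero : radialWronskian N f₁ f₁' f₂ f₂' 0 = 0 := by
    simp [radialWronskian, zero_pow (by omega : N - 1 ≠ 0)]
  simpa [hzero] using hmono ⟨le_rfl, ht.1.trans ht.2⟩ ht ht.1

theorem monotoneOn_div_of_radial_potential_le (hN : 2 ≤ N) (hnn₁ : ∀ t ∈ Ioo 0 a, 0 ≤ f₁ t)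
    (hpos₂ : ∀ t ∈ Icc 0 a, 0 < f₂ t) :
    MonotoneOn (fun t => f₁ t / f₂ t) (Icc 0 a) := by
  refine monotoneOn_div_of_wronskian_nonneg hc₁ hc₂ hpos₂ hd₁ hd₂ fun t ht => ?_
  have hW := radialWronskian_nonneg hc₁ hc₂ hc₁' hc₂' hd₁ hd₂ hode₁ hode₂ hV hN hnn₁
    (fun s hs => (hpos₂ s (Ioo_subset_Icc_self hs)).le) (Ioo_subset_Icc_self ht)
  exact nonneg_of_mul_nonneg_right hW (pow_pos ht.1 _)

end RadialComparison

theorem positive_solution_comparison_general (N : ℕ) (hN : 3 ≤ N) (R lam A : ℝ)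
    (hA : 0 < A) (φ₁ φ₂ φ₁' φ₂' U₁ U₂ : ℝ → ℝ)
    (hU₁ : ∀ r, U₁ r = ∫ s in (0 : ℝ)..r,
      A * s ^ (N - 1) * (s ^ ((2 : ℝ) - N) - r ^ ((2 : ℝ) - N)) * φ₁ s ^ 2)
    (hU₂ : ∀ r, U₂ r = ∫ s in (0 : ℝ)..r,
      A * s ^ (N - 1) * (s ^ ((2 : ℝ) - N) - r ^ ((2 : ℝ) - N)) * φ₂ s ^ 2)
    (hpos₁ : ∀ r ∈ Ico 0 R, 0 < φ₁ r) (hpos₂ : ∀ r ∈ Ico 0 R, 0 < φ₂ r)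
    (hφ₁c : ContinuousOn φ₁ (Icc 0 R)) (hφ₂c : ContinuousOn φ₂ (Icc 0 R))
    (hφ₁'c : ContinuousOn φ₁' (Icc 0 R)) (hφ₂'c : ContinuousOn φ₂' (Icc 0 R))
    (hd₁ : ∀ r ∈ Ioo 0 R, HasDerivAt φ₁ (φ₁' r) r)
    (hd₂ : ∀ r ∈ Ioo 0 R, HasDerivAt φ₂ (φ₂' r) r)
    (hode₁ : ∀ r ∈ Ioo 0 R,
      HasDerivAt φ₁' ((U₁ r - lam) * φ₁ r - (N - 1) / r * φ₁' r) r)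
    (hode₂ : ∀ r ∈ Ioo 0 R,
      HasDerivAt φ₂' ((U₂ r - lam) * φ₂ r - (N - 1) / r * φ₂' r) r)
    (h0 : φ₂ 0 < φ₁ 0) :
    ∀ r ∈ Ico 0 R, φ₂ r < φ₁ r := by
  intro r hr
  by_contra! hle
  obtain ⟨r₀, hr₀, hle₀, hlt⟩ := exists_first_le_of_lt hr.1
    (hφ₁c.mono (Icc_subset_Icc_right hr.2.le)) (hφ₂c.mono (Icc_subset_Icc_right hr.2.le)) h0 hle
  have hr₀R : r₀ < R := hr₀.2.trans_lt hr.2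
  have hIcc : Icc 0 r₀ ⊆ Icc 0 R := Icc_subset_Icc_right hr₀R.le
  have hIoo : Ioo 0 r₀ ⊆ Ioo 0 R := Ioo_subset_Ioo_right hr₀R.le
  have hpos₂' : ∀ t ∈ Icc 0 r₀, 0 < φ₂ t := fun t ht => hpos₂ t ⟨ht.1, ht.2.trans_lt hr₀R⟩
  have hU : ∀ t ∈ Ioo 0 r₀, U₂ t - lam ≤ U₁ t - lam := fun t ht => by
    have hsub : Icc 0 t ⊆ Icc 0 R := Icc_subset_Icc_right (ht.2.le.trans hr₀R.le)
    rw [hU₁, hU₂, sub_le_sub_iff_right]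
    exact radial_newton_potential_mono (by omega) hA.le ht.1.le (hφ₁c.mono hsub) (hφ₂c.mono hsub)
      fun s hs => pow_le_pow_left₀ (hpos₂' s ⟨hs.1, hs.2.trans ht.2.le⟩).le
        (hlt s ⟨hs.1, hs.2.trans_lt ht.2⟩).le 2
  have hratio := monotoneOn_div_of_radial_potential_le (hφ₁c.mono hIcc) (hφ₂c.mono hIcc)
    (hφ₁'c.mono hIcc) (hφ₂'c.mono hIcc) (fun t ht => hd₁ t (hIoo ht)) (fun t ht => hd₂ t (hIoo ht))
    (fun t ht => hode₁ t (hIoo ht)) (fun t ht => hode₂ t (hIoo ht)) hU (by omega)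
    (fun t ht => (hpos₁ t ⟨ht.1.le, ht.2.trans hr₀R⟩).le) hpos₂'
    ⟨le_rfl, hr₀.1.le⟩ ⟨hr₀.1.le, le_rfl⟩ hr₀.1.le
  have h1 : 1 < φ₁ r₀ / φ₂ r₀ :=
    ((one_lt_div (hpos₂' 0 ⟨le_rfl, hr₀.1.le⟩)).2 h0).trans_le hratio
  exact ((one_lt_div (hpos₂' r₀ ⟨hr₀.1.le, le_rfl⟩)).1 h1).not_ge hle₀

/-- Comparison: two positive radial solutions of `φ'' + ((N-1)/r)φ' = (U_φ(r) - λ)φ` with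
`φᵢ'(0) = 0` and `φ₁(0) > φ₂(0)` satisfy `φ₁ > φ₂` on `[0, R)`. -/
theorem positive_solution_comparison (N : ℕ) (hN : 3 ≤ N) (R lam A : ℝ) (hR : 0 < R)
    (hA : 0 < A) (φ₁ φ₂ φ₁' φ₂' U₁ U₂ : ℝ → ℝ)
    (hU₁ : ∀ r, U₁ r = ∫ s in (0 : ℝ)..r,
      A * s ^ (N - 1) * (s ^ ((2 : ℝ) - N) - r ^ ((2 : ℝ) - N)) * φ₁ s ^ 2)
    (hU₂ : ∀ r, U₂ r = ∫ s in (0 : ℝ)..r,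
      A * s ^ (N - 1) * (s ^ ((2 : ℝ) - N) - r ^ ((2 : ℝ) - N)) * φ₂ s ^ 2)
    (hpos₁ : ∀ r ∈ Ico 0 R, 0 < φ₁ r) (hpos₂ : ∀ r ∈ Ico 0 R, 0 < φ₂ r)
    (hφ₁c : ContinuousOn φ₁ (Icc 0 R)) (hφ₂c : ContinuousOn φ₂ (Icc 0 R))
    (hφ₁'c : ContinuousOn φ₁' (Icc 0 R)) (hφ₂'c : ContinuousOn φ₂' (Icc 0 R))
    (hd₁ : ∀ r ∈ Ioo 0 R, HasDerivAt φ₁ (φ₁' r) r)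
    (hd₂ : ∀ r ∈ Ioo 0 R, HasDerivAt φ₂ (φ₂' r) r)
    (hode₁ : ∀ r ∈ Ioo 0 R,
      HasDerivAt φ₁' ((U₁ r - lam) * φ₁ r - (N - 1) / r * φ₁' r) r)
    (hode₂ : ∀ r ∈ Ioo 0 R,
      HasDerivAt φ₂' ((U₂ r - lam) * φ₂ r - (N - 1) / r * φ₂' r) r)
    (hneu₁ : φ₁' 0 = 0) (hneu₂ : φ₂' 0 = 0)
    (h0 : φ₂ 0 < φ₁ 0) :
    ∀ r ∈ Ico 0 R, φ₂ r < φ₁ r :=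
  positive_solution_comparison_general N hN R lam A hA φ₁ φ₂ φ₁' φ₂' U₁ U₂ hU₁ hU₂ hpos₁ hpos₂ hφ₁c
    hφ₂c hφ₁'c hφ₂'c hd₁ hd₂ hode₁ hode₂ h0
end
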